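/- arXiv:2511.10428 — 3 statements merged into one kernel-verified Lean document; each statement's English description precedes it below -/
import Mathlib

section
/- Proof simplification preserves validity: let (C_1,R_1),…,(C_n,R_n) be a valid abstract proof for the input CSP C and let i satisfy 1 ≤ i < n. Consider the sequence of length n−1 obtained by deleting step i, keeping every step (C_j,R_j) with j < i unchanged, and replacing every step (C_j,R_j) with j > i by (C_j, (R_j \ C_i) ∪ R_i). Then this new sequence is a valid abstract proof for C, with the same derived constraint sets for all remaining steps (in particular, if ⊥ ∈ C_n, the new proof still derives ⊥). -/
abbrev Constraint (V : Type*) := (V → ℤ) → Prop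

def Sols {V : Type*} (C : Set (Constraint V)) : Set (V → ℤ) := {α | ∀ c ∈ C, c α}

def Entails {V : Type*} (C C' : Set (Constraint V)) : Prop := Sols C ⊆ Sols C'

theorem stmt_4 {V : Type*} (Cin : Set (Constraint V)) (n : ℕ)
    (Cs Rs : Fin n → Set (Constraint V))
    (hvalid : ∀ i : Fin n,
      Entails (Rs i) (Cs i) ∧ Rs i ⊆ Cin ∪ ⋃ j < i, Cs j)
    (i : Fin n) (hi : (i : ℕ) + 1 < n)
    (Cs' Rs' : Fin (n - 1) → Set (Constraint V))
    (hlt : ∀ k : Fin (n - 1), (k : ℕ) < (i : ℕ) →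
      Cs' k = Cs ⟨k, by have := k.isLt; omega⟩ ∧
      Rs' k = Rs ⟨k, by have := k.isLt; omega⟩)
    (hge : ∀ k : Fin (n - 1), (i : ℕ) ≤ (k : ℕ) →
      Cs' k = Cs ⟨(k : ℕ) + 1, by have := k.isLt; omega⟩ ∧
      Rs' k = (Rs ⟨(k : ℕ) + 1, by have := k.isLt; omega⟩ \ Cs i) ∪ Rs i) :
    ∀ k : Fin (n - 1),
      Entails (Rs' k) (Cs' k) ∧ Rs' k ⊆ Cin ∪ ⋃ j < k, Cs' j := by
  intro k
  have hkn := k.isLt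
  by_cases hk : (k : ℕ) < (i : ℕ)
  · obtain ⟨hC, hR⟩ := hlt k hk
    obtain ⟨hE, hS⟩ := hvalid ⟨k, by omega⟩
    refine ⟨by rw [hC, hR]; exact hE, ?_⟩
    rw [hR]
    refine hS.trans ?_
    intro c hc
    rcases hc with hc | hc
    · exact Or.inl hc
    · simp only [Set.mem_iUnion] at hc
      obtain ⟨j, hj, hc⟩ := hc
      have hjk : (j : ℕ) < (k : ℕ) := hj
      have h' : (j : ℕ) < (i : ℕ) := by omega
      have e : Cs' (⟨(j : ℕ), by omega⟩ : Fin (n - 1)) = Cs j := by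
        rw [(hlt ⟨(j : ℕ), by omega⟩ h').1]
      exact Or.inr (Set.mem_iUnion₂.mpr ⟨⟨(j : ℕ), by omega⟩,
        (by simp only [Fin.lt_def]; omega), e ▸ hc⟩)
  · push_neg at hk
    set k1 : Fin n := ⟨(k : ℕ) + 1, by omega⟩ with hk1
    obtain ⟨hC, hR⟩ := hge k hk
    obtain ⟨hE1, hS1⟩ := hvalid k1
    obtain ⟨hEi, hSi⟩ := hvalid i
    constructor
    · rw [hC, hR]
      intro α hα
      have hαi : α ∈ Sols (Cs i) := hEi (fun c hc => hα c (Or.inr hc))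
      apply hE1
      intro c hc
      by_cases hci : c ∈ Cs i
      · exact hαi c hci
      · exact hα c (Or.inl ⟨hc, hci⟩)
    · rw [hR]
      intro c hc
      rcases hc with ⟨hcR, hcni⟩ | hcR
      · rcases hS1 hcR with hc | hc
        · exact Or.inl hc
        · simp only [Set.mem_iUnion] at hc
          obtain ⟨j, hj, hc⟩ := hc
          have hjk : (j : ℕ) < (k : ℕ) + 1 := hj
          rcases lt_trichotomy (j : ℕ) (i : ℕ) with h | h | h
          · have e : Cs' (⟨(j : ℕ), by omega⟩ : Fin (n - 1)) = Cs j := by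
              rw [(hlt ⟨(j : ℕ), by omega⟩ h).1]
            exact Or.inr (Set.mem_iUnion₂.mpr ⟨⟨(j : ℕ), by omega⟩,
              (by simpa [Fin.lt_def] using (by omega : (j : ℕ) < (k : ℕ))), e ▸ hc⟩)
          · exact absurd ((congrArg Cs (Fin.ext h : j = i)) ▸ hc) hcni
          · have e : Cs' (⟨(j : ℕ) - 1, by omega⟩ : Fin (n - 1)) = Cs j := by
              rw [(hge ⟨(j : ℕ) - 1, by omega⟩ (by simpa using (by omega : (i : ℕ) ≤ (j : ℕ) - 1))).1]
              exact congrArg Cs (Fin.ext (by simp; omega))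
            exact Or.inr (Set.mem_iUnion₂.mpr ⟨⟨(j : ℕ) - 1, by omega⟩,
              (by simpa [Fin.lt_def] using (by omega : (j : ℕ) - 1 < (k : ℕ))), e ▸ hc⟩)
      · rcases hSi hcR with hc | hc
        · exact Or.inl hc
        · simp only [Set.mem_iUnion] at hc
          obtain ⟨j, hj, hc⟩ := hc
          have hji : (j : ℕ) < (i : ℕ) := hj
          have e : Cs' (⟨(j : ℕ), by omega⟩ : Fin (n - 1)) = Cs j := by
            rw [(hlt ⟨(j : ℕ), by omega⟩ hji).1]
          exact Or.inr (Set.mem_iUnion₂.mpr ⟨⟨(j : ℕ), by omega⟩,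
            (by simpa [Fin.lt_def] using (by omega : (j : ℕ) < (k : ℕ))), e ▸ hc⟩)
end

section
/- Validity of user-level constraints in proof steps (Lemma 1): let X ⊆ V, let (C,R) be a valid proof step (i.e., R ⊨ C), let s ∈ R, and let c be a constraint. Assume every constraint in C has scope contained in X, every constraint in R \ {s} has scope contained in X, and sols({c})|X ⊆ sols({s})|X (the replacement constraint c is at least as strong as s on the variables X). Then the step (C, (R \ {s}) ∪ {c}) is valid, i.e., (R \ {s}) ∪ {c} ⊨ C. -/
def ProjSols {V : Type*} (X : Set V) (C : Set (Constraint V)) : Set (X → ℤ) :=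
  (fun (α : V → ℤ) (x : X) => α x) '' Sols C

def ScopeIn {V : Type*} (X : Set V) (c : Constraint V) : Prop :=
  ∀ α β : V → ℤ, (∀ v ∈ X, α v = β v) → (c α ↔ c β)

theorem stmt_7 {V : Type*} (X : Set V) (C R : Set (Constraint V))
    (s c : Constraint V)
    (hstep : Entails R C) (hs : s ∈ R)
    (hscopeC : ∀ c' ∈ C, ScopeIn X c')
    (hscopeR : ∀ r ∈ R \ {s}, ScopeIn X r)
    (hstrong : ProjSols X {c} ⊆ ProjSols X {s}) :
    Entails ((R \ {s}) ∪ {c}) C := by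
  intro α hα
  have hcα : c α := hα c (Or.inr rfl)
  have : (fun (x : X) => α x) ∈ ProjSols X {s} := by
    apply hstrong
    exact ⟨α, fun c' hc' => by cases hc'; exact hcα, rfl⟩
  obtain ⟨β, hβs, hβeq⟩ := this
  have hagree : ∀ v ∈ X, β v = α v := fun v hv => congrFun hβeq ⟨v, hv⟩
  have hβR : β ∈ Sols R := by
    intro r hr
    by_cases hrs : r = s
    · subst hrs; exact hβs r rfl
    · have := hscopeR r ⟨hr, hrs⟩ β α hagree
      exact this.mpr (hα r (Or.inl ⟨hr, hrs⟩))
  intro c' hc'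
  exact (hscopeC c' hc' β α hagree).mp (hstep hβR c' hc')
end

section
/- Existence of a trimmed sub-proof: let (C_1,R_1),…,(C_n,R_n) be a valid abstract proof for the input CSP C with ⊥ ∈ C_n. Then there exists a valid abstract proof (C'_1,R'_1),…,(C'_m,R'_m) for C with ⊥ ∈ C'_m that is trimmed, and whose steps arise from a subsequence i_1 < … < i_m of the original steps with C'_k ⊆ C_{i_k} and R'_k ⊆ R_{i_k} for every k. -/
theorem stmt_8 {V : Type*} (Cin : Set (Constraint V)) (n : ℕ)
    (Cs Rs : Fin (n + 1) → Set (Constraint V))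
    (hvalid : ∀ i : Fin (n + 1),
      Entails (Rs i) (Cs i) ∧ Rs i ⊆ Cin ∪ ⋃ j < i, Cs j)
    (hbot : (fun _ : V → ℤ => False) ∈ Cs (Fin.last n)) :
    ∃ (m : ℕ) (Cs' Rs' : Fin (m + 1) → Set (Constraint V))
      (f : Fin (m + 1) → Fin (n + 1)),
      StrictMono f ∧
      (∀ k : Fin (m + 1), Cs' k ⊆ Cs (f k) ∧ Rs' k ⊆ Rs (f k)) ∧
      (∀ k : Fin (m + 1),
        Entails (Rs' k) (Cs' k) ∧ Rs' k ⊆ Cin ∪ ⋃ j < k, Cs' j) ∧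
      (∀ k : Fin (m + 1), k < Fin.last m →
        ∀ c ∈ Cs' k, ∃ j : Fin (m + 1), k < j ∧ c ∈ Rs' j) ∧
      (fun _ : V → ℤ => False) ∈ Cs' (Fin.last m) := by
  refine ⟨n,
    fun k => if k = Fin.last n then {fun _ => False}
      else Cs k ∩ {c | ∃ j, k < j ∧ c ∈ Rs j},
    Rs, id, strictMono_id, ?_, ?_, ?_, ?_⟩
  · intro k
    refine ⟨?_, subset_rfl⟩
    by_cases hk : k = Fin.last n
    · subst hk; beta_reduce; rw [if_pos rfl]
      intro c hc
      simp only [Set.mem_singleton_iff] at hc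
      subst hc; exact hbot
    · beta_reduce; rw [if_neg hk]
      exact Set.inter_subset_left
  · intro k
    constructor
    · by_cases hk : k = Fin.last n
      · subst hk; beta_reduce; rw [if_pos rfl]
        intro α hα
        exfalso
        have := (hvalid (Fin.last n)).1 hα
        exact this _ hbot
      · beta_reduce; rw [if_neg hk]
        intro α hα c hc
        exact (hvalid k).1 hα c hc.1
    · intro c hc
      rcases (hvalid k).2 hc with h | h
      · exact Or.inl h
      · right
        simp only [Set.mem_iUnion] at h ⊢
        obtain ⟨j, hj, hcj⟩ := h
        refine ⟨j, hj, ?_⟩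
        have hjne : j ≠ Fin.last n := by
          intro h; subst h; exact absurd hj (not_lt.2 (Fin.le_last k))
        rw [if_neg hjne]
        exact ⟨hcj, k, hj, hc⟩
  · intro k hk c hc
    beta_reduce at hc; rw [if_neg (Fin.ne_last_of_lt hk)] at hc
    exact hc.2
  · simp
end
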